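/- Let λ, d > 0, P(x, S) = 2dλ − x³ + xS, S* the unique positive solution of P(x, x) = 0, R = {(x, S) ∈ ℝ²_{≥0} : S ≤ x, P(x, S) ≥ 0}, and suppose η < min{2/(3(S*+1)²), 2/max_{(x,S)∈R} P(x, S)}. Let x_0 = S_0 = 0, x_{t+1} = x_t + (η/2) P(x_t, S_t), S_{t+1} = S_t + (η²/4) P(x_t, S_t)², let S_∞ = lim_t S_t, and let M = ((S*)² + S* ℓ_{S_∞} + (2dλ)^{2/3})/2. Then for every t ≥ 0, x_{t+1} − x_t ≤ η M (ℓ_{S_t} − x_t). -/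

import Mathlib

/-!
Write `A = 2dλ`. Since `P(x, x) ≥ P(x, S) ≥ 0` on `R` and `x ↦ x³ - x²` is increasing beyond
`S* > 1`, every point of `R` has `x ≤ S*`; the step-size bound then keeps the iterates in `R`.
Because `ℓ_S` is a root of `P(·, S)`, the cubic factors as
`P(x, S) = (ℓ_S - x)(ℓ_S² + ℓ_S x + x² - S)`, and the second factor is at most
`(S*)² + S* ℓ_{S_∞} + A^{2/3}`: `x ≤ S*`, `ℓ` is increasing in `S` and `S_t ≤ S_∞`, and
`ℓ_S (ℓ_S² - S) = A` with `ℓ_S ≥ A^{1/3}`. The increment `x_{t+1} - x_t = (η/2) P(x_t, S_t)`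
is therefore at most `η M (ℓ_{S_t} - x_t)`.
-/

namespace CubicDescent

def P (A x S : ℝ) : ℝ := A - x ^ 3 + x * S

def region (A : ℝ) : Set (ℝ × ℝ) :=
  {p | 0 ≤ p.1 ∧ 0 ≤ p.2 ∧ p.2 ≤ p.1 ∧ 0 ≤ P A p.1 p.2}

noncomputable def step (A η : ℝ) (p : ℝ × ℝ) : ℝ × ℝ :=
  (p.1 + η / 2 * P A p.1 p.2, p.2 + η ^ 2 / 4 * P A p.1 p.2 ^ 2)

variable {A η s x S ℓ : ℝ}

lemma one_lt_of_P_self_eq_zero (hA : 0 < A) (hs : P A s s = 0) : 1 < s := by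
  unfold P at hs
  nlinarith [sq_nonneg s]

lemma le_of_mem_region (hA : 0 < A) (hs : P A s s = 0) {p : ℝ × ℝ} (hp : p ∈ region A) :
    p.1 ≤ s := by
  obtain ⟨hx, -, hSx, hP⟩ := hp
  have hs1 := one_lt_of_P_self_eq_zero hA hs
  unfold P at hs hP
  by_contra! h
  have hPx : 0 ≤ A - p.1 ^ 3 + p.1 * p.1 := by nlinarith [mul_nonneg hx (sub_nonneg.2 hSx)]
  -- `x³ - x² - (s³ - s²) = (x - s)(x² + xs + s² - x - s)`, and both factors are positive
  have hfac : 0 < p.1 ^ 2 + p.1 * s + s ^ 2 - p.1 - s := by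
    nlinarith [mul_pos (by linarith : 0 < p.1) (by linarith : 0 < p.1 - 1),
      mul_pos (by linarith : 0 < s) (by linarith : 0 < s - 1),
      mul_pos (by linarith : 0 < p.1) (by linarith : 0 < s)]
  nlinarith [mul_pos (sub_pos.2 h) hfac]

lemma P_step_eq (x S : ℝ) :
    P A (x + η / 2 * P A x S) (S + η ^ 2 / 4 * P A x S ^ 2) =
      P A x S - η / 2 * P A x S * (3 * x ^ 2 + 2 * x * (η / 2 * P A x S) - S) := by
  unfold P
  ring

lemma step_mem_region (hA : 0 < A) (hs : P A s s = 0) (hη : 0 ≤ η)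
    (hηs : η * (3 * (s + 1) ^ 2) ≤ 2) {p : ℝ × ℝ} (hp : p ∈ region A)
    (hηP : η * P A p.1 p.2 ≤ 2) : step A η p ∈ region A := by
  have hxs := le_of_mem_region hA hs hp
  obtain ⟨hx, hS, hSx, hP⟩ := hp
  set a := η / 2 * P A p.1 p.2 with ha
  have ha0 : 0 ≤ a := by positivity
  have ha1 : a ≤ 1 := by linarith
  have hsq : η ^ 2 / 4 * P A p.1 p.2 ^ 2 = a ^ 2 := by rw [ha]; ring
  refine ⟨by simp only [step]; linarith, by simp only [step]; positivity, ?_, ?_⟩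
  · simp only [step, hsq, ← ha]
    nlinarith
  · simp only [step]
    rw [P_step_eq, ← ha]
    have hfac : 3 * p.1 ^ 2 + 2 * p.1 * a - p.2 ≤ 3 * (s + 1) ^ 2 := by nlinarith
    nlinarith [mul_le_mul_of_nonneg_left hfac ha0]

lemma mem_region_of_step_eq {z : ℕ → ℝ × ℝ} (hA : 0 < A) (hs : P A s s = 0) (hη : 0 ≤ η)
    (hηs : η * (3 * (s + 1) ^ 2) ≤ 2) (hηP : ∀ p ∈ region A, η * P A p.1 p.2 ≤ 2)
    (h0 : z 0 = (0, 0)) (hz : ∀ t, z (t + 1) = step A η (z t)) (t : ℕ) : z t ∈ region A := by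
  induction t with
  | zero => simp [h0, region, P, hA.le]
  | succ t ih => exact hz t ▸ step_mem_region hA hs hη hηs ih (hηP _ ih)

lemma P_eq_mul_of_root (hℓ : P A ℓ S = 0) (x : ℝ) :
    P A x S = (ℓ - x) * (ℓ ^ 2 + ℓ * x + x ^ 2 - S) := by
  unfold P at *
  linear_combination hℓ

lemma lt_sq_of_root (hA : 0 < A) (hℓ0 : 0 < ℓ) (hℓ : P A ℓ S = 0) : S < ℓ ^ 2 := by
  unfold P at hℓ
  nlinarith

lemma le_root_of_P_nonneg (hA : 0 < A) (hℓ0 : 0 < ℓ) (hℓ : P A ℓ S = 0) (hx : 0 ≤ x)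
    (hP : 0 ≤ P A x S) : x ≤ ℓ := by
  have hfac : 0 < ℓ ^ 2 + ℓ * x + x ^ 2 - S := by
    nlinarith [lt_sq_of_root hA hℓ0 hℓ, mul_nonneg hℓ0.le hx]
  rw [P_eq_mul_of_root hℓ] at hP
  linarith [(mul_nonneg_iff_of_pos_right hfac).mp hP]

lemma root_mono {ℓ' S' : ℝ} (hA : 0 < A) (hℓ0 : 0 < ℓ) (hℓ : P A ℓ S = 0) (hℓ'0 : 0 < ℓ')
    (hℓ' : P A ℓ' S' = 0) (hSS' : S ≤ S') : ℓ ≤ ℓ' := by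
  refine le_root_of_P_nonneg hA hℓ'0 hℓ' hℓ0.le ?_
  have : P A ℓ S ≤ P A ℓ S' := by unfold P; nlinarith
  linarith

lemma sq_sub_le_rpow (hA : 0 < A) (hS : 0 ≤ S) (hℓ0 : 0 < ℓ) (hℓ : P A ℓ S = 0) :
    ℓ ^ 2 - S ≤ A ^ ((2 : ℝ) / 3) := by
  set c := A ^ ((1 : ℝ) / 3)
  have hc3 : c ^ 3 = A := by
    rw [← Real.rpow_natCast, ← Real.rpow_mul hA.le]
    norm_num
  have hc2 : A ^ ((2 : ℝ) / 3) = c ^ 2 := by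
    rw [← Real.rpow_natCast, ← Real.rpow_mul hA.le]
    norm_num
  unfold P at hℓ
  have hcℓ : c ≤ ℓ := le_of_pow_le_pow_left₀ three_ne_zero hℓ0.le (by nlinarith)
  -- `ℓ (ℓ² - S) = A = c · c² ≤ ℓ c²`
  rw [hc2]
  nlinarith [mul_le_mul_of_nonneg_right hcℓ (sq_nonneg c)]

lemma step_sub_le {L : ℝ} (hA : 0 < A) (hs : P A s s = 0) (hη : 0 ≤ η) {p : ℝ × ℝ}
    (hp : p ∈ region A) (hℓ0 : 0 < ℓ) (hℓ : P A ℓ p.2 = 0) (hℓL : ℓ ≤ L) :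
    (step A η p).1 - p.1 ≤ η * ((s ^ 2 + s * L + A ^ ((2 : ℝ) / 3)) / 2) * (ℓ - p.1) := by
  have hxs := le_of_mem_region hA hs hp
  obtain ⟨hx, hS, -, hP⟩ := hp
  have hxℓ := le_root_of_P_nonneg hA hℓ0 hℓ hx hP
  have hfac : ℓ ^ 2 + ℓ * p.1 + p.1 ^ 2 - p.2 ≤ s ^ 2 + s * L + A ^ ((2 : ℝ) / 3) := by
    nlinarith [sq_sub_le_rpow hA hS hℓ0 hℓ, mul_le_mul hℓL hxs hx (hℓ0.le.trans hℓL)]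
  calc (step A η p).1 - p.1 = η / 2 * ((ℓ - p.1) * (ℓ ^ 2 + ℓ * p.1 + p.1 ^ 2 - p.2)) := by
        rw [step, ← P_eq_mul_of_root hℓ]; ring
    _ ≤ η / 2 * ((ℓ - p.1) * (s ^ 2 + s * L + A ^ ((2 : ℝ) / 3))) := by
        gcongr
    _ = η * ((s ^ 2 + s * L + A ^ ((2 : ℝ) / 3)) / 2) * (ℓ - p.1) := by ring

end CubicDescent

open CubicDescent

theorem stmt_16_general (lam d η : ℝ) (hlam : 0 < lam) (hd : 0 < d) (hη : 0 < η)
    (Sstar : ℝ)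
    (hSstarroot : 2 * d * lam - Sstar ^ 3 + Sstar * Sstar = 0)
    (Pmax : ℝ)
    (hPmax : IsGreatest ((fun p : ℝ × ℝ => 2 * d * lam - p.1 ^ 3 + p.1 * p.2) ''
      {p : ℝ × ℝ | 0 ≤ p.1 ∧ 0 ≤ p.2 ∧ p.2 ≤ p.1 ∧
        0 ≤ 2 * d * lam - p.1 ^ 3 + p.1 * p.2}) Pmax)
    (hηbound : η < min (2 / (3 * (Sstar + 1) ^ 2)) (2 / Pmax))
    (ℓ : ℝ → ℝ)
    (hℓpos : ∀ s, 0 ≤ s → 0 < ℓ s)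
    (hℓroot : ∀ s, 0 ≤ s → 2 * d * lam - (ℓ s) ^ 3 + ℓ s * s = 0)
    (x S : ℕ → ℝ) (hx0 : x 0 = 0) (hS0 : S 0 = 0)
    (hx : ∀ t, x (t + 1) = x t + (η / 2) * (2 * d * lam - (x t) ^ 3 + x t * S t))
    (hS : ∀ t, S (t + 1) = S t + (η ^ 2 / 4) * (2 * d * lam - (x t) ^ 3 + x t * S t) ^ 2)
    (Sinf : ℝ) (hSinf : Filter.Tendsto S Filter.atTop (nhds Sinf)) :
    ∀ t, x (t + 1) - x t ≤
      η * ((Sstar ^ 2 + Sstar * ℓ Sinf + (2 * d * lam) ^ ((2 : ℝ) / 3)) / 2)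
        * (ℓ (S t) - x t) := by
  have hA : 0 < 2 * d * lam := by positivity
  obtain ⟨hηs, hηP⟩ := lt_min_iff.mp hηbound
  have hSstar_gt_one := one_lt_of_P_self_eq_zero hA hSstarroot
  have hPmax_pos : 0 < Pmax := (div_pos_iff_of_pos_left two_pos).mp (hη.trans hηP)
  have hηR : ∀ p ∈ region (2 * d * lam), η * P (2 * d * lam) p.1 p.2 ≤ 2 := fun p hp =>
    calc η * P _ p.1 p.2 ≤ η * Pmax := by gcongr; exact hPmax.2 ⟨p, hp, rfl⟩
      _ ≤ 2 := ((lt_div_iff₀ hPmax_pos).mp hηP).le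
  have hR : ∀ t, (x t, S t) ∈ region (2 * d * lam) :=
    mem_region_of_step_eq (z := fun t => (x t, S t)) hA hSstarroot hη.le
      ((lt_div_iff₀ (by positivity)).mp hηs).le hηR (by simp [hx0, hS0])
      (fun t => Prod.ext (hx t) (hS t))
  have hS_mono : Monotone S := monotone_nat_of_le_succ fun t => by
    rw [hS t]; exact le_add_of_nonneg_right (by positivity)
  have hS_le : ∀ t, S t ≤ Sinf := hS_mono.ge_of_tendsto hSinf
  have hSinf_nonneg : 0 ≤ Sinf := hS0 ▸ hS_le 0
  intro t
  rw [hx t]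
  have hSt := (hR t).2.1
  exact step_sub_le hA hSstarroot hη.le (hR t) (hℓpos _ hSt) (hℓroot _ hSt)
    (root_mono hA (hℓpos _ hSt) (hℓroot _ hSt) (hℓpos _ hSinf_nonneg) (hℓroot _ hSinf_nonneg)
      (hS_le t))

/-- Under the step-size bound, with `M = ((S*)² + S* ℓ_{S_∞} + (2dλ)^{2/3})/2`,
for every `t ≥ 0`: `x_{t+1} − x_t ≤ η M (ℓ_{S_t} − x_t)`. -/
theorem stmt_16 (lam d η : ℝ) (hlam : 0 < lam) (hd : 0 < d) (hη : 0 < η)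
    (Sstar : ℝ) (hSstar : 0 < Sstar)
    (hSstarroot : 2 * d * lam - Sstar ^ 3 + Sstar * Sstar = 0)
    (hSstaruniq : ∀ z, 0 < z → 2 * d * lam - z ^ 3 + z * z = 0 → z = Sstar)
    (Pmax : ℝ)
    (hPmax : IsGreatest ((fun p : ℝ × ℝ => 2 * d * lam - p.1 ^ 3 + p.1 * p.2) ''
      {p : ℝ × ℝ | 0 ≤ p.1 ∧ 0 ≤ p.2 ∧ p.2 ≤ p.1 ∧
        0 ≤ 2 * d * lam - p.1 ^ 3 + p.1 * p.2}) Pmax)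
    (hηbound : η < min (2 / (3 * (Sstar + 1) ^ 2)) (2 / Pmax))
    (ℓ : ℝ → ℝ)
    (hℓpos : ∀ s, 0 ≤ s → 0 < ℓ s)
    (hℓroot : ∀ s, 0 ≤ s → 2 * d * lam - (ℓ s) ^ 3 + ℓ s * s = 0)
    (hℓuniq : ∀ s, 0 ≤ s → ∀ z, 0 < z → 2 * d * lam - z ^ 3 + z * s = 0 → z = ℓ s)
    (x S : ℕ → ℝ) (hx0 : x 0 = 0) (hS0 : S 0 = 0)
    (hx : ∀ t, x (t + 1) = x t + (η / 2) * (2 * d * lam - (x t) ^ 3 + x t * S t))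
    (hS : ∀ t, S (t + 1) = S t + (η ^ 2 / 4) * (2 * d * lam - (x t) ^ 3 + x t * S t) ^ 2)
    (Sinf : ℝ) (hSinf : Filter.Tendsto S Filter.atTop (nhds Sinf)) :
    ∀ t, x (t + 1) - x t ≤
      η * ((Sstar ^ 2 + Sstar * ℓ Sinf + (2 * d * lam) ^ ((2 : ℝ) / 3)) / 2)
        * (ℓ (S t) - x t) :=
  stmt_16_general lam d η hlam hd hη Sstar hSstarroot Pmax hPmax hηbound ℓ hℓpos hℓroot x S hx0 hS0
    hx hS Sinf hSinf
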